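/- Fix Λ > 0 and θ ∈ [0,2π), and set γ_→ := e^{i(θ + √2Λ + 3π/4)} and γ_← := e^{i(−θ + √2Λ + 3π/4)}. For α₂, α₃ ∈ ℂ, the following are equivalent: (i) for all c_L, c_R ∈ ℂ, the function ψ := c_L·f + c_R·g (with boundary values given by the corresponding linear combinations of the boundary values of f and g) satisfies ψ(Λ) = α₂·ψ′(−Λ) and ψ′(Λ) = α₃·ψ(−Λ); (ii) α₂ = −e^{iθ} and α₃ = e^{iθ}. -/

import Mathlib

/-!
Across the junction `[-Λ, Λ]` the decaying waves pick up the phase `e^{i√2Λ}`: since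
`√2 Λ = 2Λ/√2`, one has `e^{i√2Λ} R₋(Λ) = L₊(-Λ)` and `e^{i√2Λ} L₋(-Λ) = R₊(Λ)`. Feeding this
into the definitions of `γ_→` and `γ_←` shows that at `x = Λ` the values of `f` and `g` are
`-e^{iθ}` times their derivatives at `-Λ`, and their derivatives are `e^{iθ}` times their values
at `-Λ`. Testing the boundary conditions on `f` alone (`c_R = 0`) then pins `α₂` and `α₃`, while
the converse is linear in `(c_L, c_R)`.
-/

open ComplexConjugate Real

/-- The normalization factor `N = 2^{1/4} e^{Λ/√2}` of the paper. -/
noncomputable def Nc (Λ : ℝ) : ℂ :=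
  (((2 : ℝ) ^ ((1 : ℝ) / 4) * Real.exp (Λ / Real.sqrt 2) : ℝ) : ℂ)

/-- `L₊(x) = N e^{(1-i)x/√2}` for `x < -Λ`, and `0` beyond the junction. -/
noncomputable def Lp (Λ : ℝ) (x : ℝ) : ℂ :=
  if x < -Λ then Nc Λ * Complex.exp ((1 - Complex.I) * x / Real.sqrt 2) else 0

/-- `L₋(x) = N e^{(1+i)x/√2}` for `x < -Λ`, and `0` beyond the junction. -/
noncomputable def Lm (Λ : ℝ) (x : ℝ) : ℂ :=
  if x < -Λ then Nc Λ * Complex.exp ((1 + Complex.I) * x / Real.sqrt 2) else 0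

/-- `R₊(x) = N e^{(-1+i)x/√2}` for `x > Λ`, and `0` beyond the junction. -/
noncomputable def Rp (Λ : ℝ) (x : ℝ) : ℂ :=
  if Λ < x then Nc Λ * Complex.exp ((-1 + Complex.I) * x / Real.sqrt 2) else 0

/-- `R₋(x) = N e^{(-1-i)x/√2}` for `x > Λ`, and `0` beyond the junction. -/
noncomputable def Rm (Λ : ℝ) (x : ℝ) : ℂ :=
  if Λ < x then Nc Λ * Complex.exp ((-1 - Complex.I) * x / Real.sqrt 2) else 0

/-- One-sided boundary value `L₊(-Λ) = N e^{-(1-i)Λ/√2}`. -/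
noncomputable def LpB (Λ : ℝ) : ℂ := Nc Λ * Complex.exp (-((1 - Complex.I) * Λ) / Real.sqrt 2)

/-- One-sided boundary value `L₋(-Λ) = N e^{-(1+i)Λ/√2}`. -/
noncomputable def LmB (Λ : ℝ) : ℂ := Nc Λ * Complex.exp (-((1 + Complex.I) * Λ) / Real.sqrt 2)

/-- One-sided boundary value `R₊(Λ) = N e^{(-1+i)Λ/√2}`. -/
noncomputable def RpB (Λ : ℝ) : ℂ := Nc Λ * Complex.exp ((-1 + Complex.I) * Λ / Real.sqrt 2)

/-- One-sided boundary value `R₋(Λ) = N e^{(-1-i)Λ/√2}`. -/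
noncomputable def RmB (Λ : ℝ) : ℂ := Nc Λ * Complex.exp ((-1 - Complex.I) * Λ / Real.sqrt 2)

open Complex

theorem forall_linear_combination_eq_mul_iff {K : Type*} [Field K] {p q p' q' a α : K}
    (hp : p = a * p') (hq : q = a * q') (hp' : p' ≠ 0) :
    (∀ c d : K, c * p + d * q = α * (c * p' + d * q')) ↔ α = a := by
  constructor
  · intro h
    apply mul_right_cancel₀ hp'
    simpa [← hp] using (h 1 0).symm
  · rintro rfl c d
    rw [hp, hq]
    ring

theorem Nc_ne_zero (Λ : ℝ) : Nc Λ ≠ 0 := by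
  rw [Nc, ne_eq, ofReal_eq_zero]
  positivity

theorem LpB_ne_zero (Λ : ℝ) : LpB Λ ≠ 0 :=
  mul_ne_zero (Nc_ne_zero Λ) (exp_ne_zero _)

theorem I_mul_sqrt_two_mul_add_div_sqrt_two (Λ : ℝ) (w : ℂ) :
    I * (Real.sqrt 2 * Λ) + w / Real.sqrt 2 = (w + 2 * I * Λ) / Real.sqrt 2 := by
  have hs : (Real.sqrt 2 : ℂ) ≠ 0 := by exact_mod_cast Real.sqrt_ne_zero'.2 two_pos
  have hs2 : (Real.sqrt 2 : ℂ) ^ 2 = 2 := by exact_mod_cast Real.sq_sqrt zero_le_two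
  field_simp
  linear_combination I * Λ * hs2

theorem exp_I_mul_sqrt_two_mul_RmB (Λ : ℝ) :
    exp (I * (Real.sqrt 2 * Λ)) * RmB Λ = LpB Λ := by
  rw [RmB, LpB, mul_left_comm, ← Complex.exp_add, I_mul_sqrt_two_mul_add_div_sqrt_two]
  ring_nf

theorem exp_I_mul_sqrt_two_mul_LmB (Λ : ℝ) :
    exp (I * (Real.sqrt 2 * Λ)) * LmB Λ = RpB Λ := by
  rw [LmB, RpB, mul_left_comm, ← Complex.exp_add, I_mul_sqrt_two_mul_add_div_sqrt_two]
  ring_nf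

theorem exp_mul_RmB_eq_neg_exp_mul_LpB (θ Λ : ℝ) :
    exp (I * (θ + Real.sqrt 2 * Λ + 3 * π / 4)) * RmB Λ =
      -exp (I * θ) * (exp (-(I * (π / 4))) * LpB Λ) :=
  calc _ = exp (π * I + I * θ + -(I * (π / 4)) + I * (Real.sqrt 2 * Λ)) * RmB Λ := by
        congr 2; ring
    _ = _ := by
        simp only [Complex.exp_add, exp_pi_mul_I, ← exp_I_mul_sqrt_two_mul_RmB]; ring

theorem exp_mul_exp_mul_RmB_eq_exp_mul_LpB (θ Λ : ℝ) :
    exp (-(I * (3 * π / 4))) * (exp (I * (θ + Real.sqrt 2 * Λ + 3 * π / 4)) * RmB Λ) =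
      exp (I * θ) * LpB Λ := by
  have h : exp (-(I * (3 * π / 4))) * exp (-(I * (π / 4))) = -1 := by
    rw [← Complex.exp_add, ← exp_neg_pi_mul_I]; ring_nf
  rw [exp_mul_RmB_eq_neg_exp_mul_LpB]
  linear_combination (-exp (I * θ) * LpB Λ) * h

theorem RpB_eq_neg_exp_mul_exp_mul_LmB (θ Λ : ℝ) :
    RpB Λ = -exp (I * θ) *
      (exp (I * (π / 4)) * (exp (I * (-θ + Real.sqrt 2 * Λ + 3 * π / 4)) * LmB Λ)) :=
  calc RpB Λ = exp (-(π * I) + I * θ + I * (π / 4) + I * (-θ + Real.sqrt 2 * Λ + 3 * π / 4)) *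
        LmB Λ := by
        rw [← exp_I_mul_sqrt_two_mul_LmB]; congr 2; ring
    _ = _ := by simp only [Complex.exp_add, exp_neg_pi_mul_I]; ring

theorem exp_mul_RpB_eq_exp_mul_exp_mul_LmB (θ Λ : ℝ) :
    exp (I * (3 * π / 4)) * RpB Λ =
      exp (I * θ) * (exp (I * (-θ + Real.sqrt 2 * Λ + 3 * π / 4)) * LmB Λ) := by
  have h : exp (I * (3 * π / 4)) * exp (I * (π / 4)) = -1 := by
    rw [← Complex.exp_add, ← exp_pi_mul_I]; ring_nf
  rw [RpB_eq_neg_exp_mul_exp_mul_LmB θ]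
  linear_combination
    (-exp (I * θ) * (exp (I * (-θ + Real.sqrt 2 * Λ + 3 * π / 4)) * LmB Λ)) * h

theorem stmt13_general (Λ : ℝ) (θ : ℝ)
    (γr γl : ℂ)
    (hγr : γr = Complex.exp (Complex.I * (θ + Real.sqrt 2 * Λ + 3 * π / 4)))
    (hγl : γl = Complex.exp (Complex.I * (-θ + Real.sqrt 2 * Λ + 3 * π / 4)))
    (α₂ α₃ : ℂ)
    (fBm fBm' fBp fBp' gBm gBm' gBp gBp' : ℂ)
    (hfBm : fBm = LpB Λ)
    (hfBm' : fBm' = Complex.exp (-(Complex.I * (π / 4))) * LpB Λ)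
    (hfBp : fBp = γr * RmB Λ)
    (hfBp' : fBp' = Complex.exp (-(Complex.I * (3 * π / 4))) * (γr * RmB Λ))
    (hgBm : gBm = γl * LmB Λ)
    (hgBm' : gBm' = Complex.exp (Complex.I * (π / 4)) * (γl * LmB Λ))
    (hgBp : gBp = RpB Λ)
    (hgBp' : gBp' = Complex.exp (Complex.I * (3 * π / 4)) * RpB Λ) :
    (∀ cL cR : ℂ,
      cL * fBp + cR * gBp = α₂ * (cL * fBm' + cR * gBm') ∧
      cL * fBp' + cR * gBp' = α₃ * (cL * fBm + cR * gBm)) ↔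
    (α₂ = -Complex.exp (Complex.I * θ) ∧ α₃ = Complex.exp (Complex.I * θ)) := by
  subst hγr hγl hfBm hfBm' hfBp hfBp' hgBm hgBm' hgBp hgBp'
  simp only [forall_and]
  exact and_congr
    (forall_linear_combination_eq_mul_iff (exp_mul_RmB_eq_neg_exp_mul_LpB θ Λ)
      (RpB_eq_neg_exp_mul_exp_mul_LmB θ Λ) (mul_ne_zero (exp_ne_zero _) (LpB_ne_zero Λ)))
    (forall_linear_combination_eq_mul_iff (exp_mul_exp_mul_RmB_eq_exp_mul_LpB θ Λ)
      (exp_mul_RpB_eq_exp_mul_exp_mul_LmB θ Λ) (LpB_ne_zero Λ))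

/-- Theorem 2 of the paper: with `γ_→ = e^{i(θ+√2Λ+3π/4)}` and
`γ_← = e^{i(-θ+√2Λ+3π/4)}`, every `ψ = c_L f + c_R g` satisfies
`ψ(Λ) = α₂ ψ'(-Λ)` and `ψ'(Λ) = α₃ ψ(-Λ)` iff `α₂ = -e^{iθ}` and
`α₃ = e^{iθ}`. -/
theorem stmt13 (Λ : ℝ) (hΛ : 0 < Λ) (θ : ℝ) (hθ0 : 0 ≤ θ) (hθ2 : θ < 2 * π)
    (γr γl : ℂ)
    (hγr : γr = Complex.exp (Complex.I * (θ + Real.sqrt 2 * Λ + 3 * π / 4)))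
    (hγl : γl = Complex.exp (Complex.I * (-θ + Real.sqrt 2 * Λ + 3 * π / 4)))
    (α₂ α₃ : ℂ)
    (fBm fBm' fBp fBp' gBm gBm' gBp gBp' : ℂ)
    (hfBm : fBm = LpB Λ)
    (hfBm' : fBm' = Complex.exp (-(Complex.I * (π / 4))) * LpB Λ)
    (hfBp : fBp = γr * RmB Λ)
    (hfBp' : fBp' = Complex.exp (-(Complex.I * (3 * π / 4))) * (γr * RmB Λ))
    (hgBm : gBm = γl * LmB Λ)
    (hgBm' : gBm' = Complex.exp (Complex.I * (π / 4)) * (γl * LmB Λ))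
    (hgBp : gBp = RpB Λ)
    (hgBp' : gBp' = Complex.exp (Complex.I * (3 * π / 4)) * RpB Λ) :
    (∀ cL cR : ℂ,
      cL * fBp + cR * gBp = α₂ * (cL * fBm' + cR * gBm') ∧
      cL * fBp' + cR * gBp' = α₃ * (cL * fBm + cR * gBm)) ↔
    (α₂ = -Complex.exp (Complex.I * θ) ∧ α₃ = Complex.exp (Complex.I * θ)) :=
  stmt13_general Λ θ γr γl hγr hγl α₂ α₃ fBm fBm' fBp fBp' gBm gBm' gBp gBp' hfBm hfBm' hfBp hfBp'
    hgBm hgBm' hgBp hgBp'
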